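/- For every integer n ≥ 2 the q-Hermite polynomials satisfy the three-term recurrence H_{n,q}(qx) = x q^n H_{n-1,q}(x) − [n−1]_q q^{n-2} H_{n-2,q}(x), as an identity of real polynomials in x. -/
import Mathlib


open Polynomial Finset

/-- The q-integer [n]_q = 1 + q + ... + q^(n-1). -/
noncomputable def qInt (q : ℝ) (n : ℕ) : ℝ := ∑ i ∈ Finset.range n, q ^ i

/-- The q-factorial [n]_q! = [1]_q [2]_q ... [n]_q, with [0]_q! = 1. -/
noncomputable def qFact (q : ℝ) : ℕ → ℝ
  | 0 => 1
  | n + 1 => qFact q n * qInt q (n + 1)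

/-- The q-binomial coefficient [n choose k]_q = [n]_q! / ([k]_q! [n-k]_q!). -/
noncomputable def qBinom (q : ℝ) (n k : ℕ) : ℝ := qFact q n / (qFact q k * qFact q (n - k))

/-- The q-derivative on real polynomials, determined by D_q(x^n) = [n]_q x^(n-1). -/
noncomputable def qDeriv (q : ℝ) (p : Polynomial ℝ) : Polynomial ℝ :=
  p.sum fun n a => Polynomial.C (a * qInt q n) * Polynomial.X ^ (n - 1)

/-- The q-double factorial `[2n]_q!! = [2n]_q [2n-2]_q ⋯ [2]_q`, with `[0]_q!! = 1`;
`qEvenDFact q n` is `[2n]_q!!`. -/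
noncomputable def qEvenDFact (q : ℝ) : ℕ → ℝ
  | 0 => 1
  | n + 1 => qInt q (2 * (n + 1)) * qEvenDFact q n

/-- The coefficients of the q-Hermite polynomials:
`h_{2k} = (−1)^k q^(k(k-1)) [2k]_q!/[2k]_q!!` and `h_{2k+1} = 0`. -/
noncomputable def qHermiteCoeff (q : ℝ) (m : ℕ) : ℝ :=
  if m % 2 = 0 then
    (-1 : ℝ) ^ (m / 2) * q ^ ((m / 2) * (m / 2 - 1)) * qFact q m / qEvenDFact q (m / 2)
  else 0

/-- The q-Hermite polynomials `H_{n,q}(x) = Σ_{m=0}^n [n choose m]_q h_m x^(n-m)`. -/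
noncomputable def qHermite (q : ℝ) (n : ℕ) : Polynomial ℝ :=
  ∑ m ∈ Finset.range (n + 1),
    Polynomial.C (qBinom q n m * qHermiteCoeff q m) * Polynomial.X ^ (n - m)

variable {q : ℝ}

lemma qInt_pos (hq : 0 < q) {n : ℕ} (hn : 1 ≤ n) : 0 < qInt q n := by
  unfold qInt
  apply Finset.sum_pos (fun i _ => pow_pos hq i)
  exact Finset.nonempty_range_iff.2 (by omega)

lemma qInt_ne (hq : 0 < q) {n : ℕ} (hn : 1 ≤ n) : qInt q n ≠ 0 := (qInt_pos hq hn).ne'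

lemma qFact_pos (hq : 0 < q) (n : ℕ) : 0 < qFact q n := by
  induction n with
  | zero => norm_num [qFact]
  | succ k ih => exact mul_pos ih (qInt_pos hq (by omega))

lemma qFact_ne (hq : 0 < q) (n : ℕ) : qFact q n ≠ 0 := (qFact_pos hq n).ne'

lemma qEvenDFact_pos (hq : 0 < q) (n : ℕ) : 0 < qEvenDFact q n := by
  induction n with
  | zero => norm_num [qEvenDFact]
  | succ k ih => exact mul_pos (qInt_pos hq (by omega)) ih

lemma qEvenDFact_ne (hq : 0 < q) (n : ℕ) : qEvenDFact q n ≠ 0 := (qEvenDFact_pos hq n).ne'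

lemma qInt_add (a b : ℕ) : qInt q (a + b) = qInt q a + q ^ a * qInt q b := by
  unfold qInt
  rw [Finset.sum_range_add, Finset.mul_sum]
  simp [pow_add]

lemma qHermiteCoeff_even (k : ℕ) :
    qHermiteCoeff q (2 * k) = (-1 : ℝ) ^ k * q ^ (k * (k - 1)) * qFact q (2 * k) / qEvenDFact q k := by
  simp [qHermiteCoeff, Nat.mul_div_cancel_left, Nat.mul_mod_right]

lemma qHermiteCoeff_odd {m : ℕ} (h : m % 2 = 1) : qHermiteCoeff q m = 0 := by
  simp [qHermiteCoeff, h]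

lemma qBinom_zero (hq : 0 < q) (n : ℕ) : qBinom q n 0 = 1 := by
  simp [qBinom, qFact, div_self (qFact_ne hq n)]

lemma qBinom_self (hq : 0 < q) (n : ℕ) : qBinom q n n = 1 := by
  simp [qBinom, qFact, div_self (qFact_ne hq n)]

lemma qFact_succ (n : ℕ) : qFact q (n+1) = qFact q n * qInt q (n+1) := rfl
lemma qEvenDFact_succ (n : ℕ) : qEvenDFact q (n+1) = qInt q (2*(n+1)) * qEvenDFact q n := rfl

lemma key_main (hq0 : 0 < q) (j s : ℕ) :
    qBinom q (2*j+s+3) (2*(j+1)) * qHermiteCoeff q (2*(j+1)) * q ^ (s+1)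
    = q ^ (2*j+s+3) * (qBinom q (2*j+s+2) (2*(j+1)) * qHermiteCoeff q (2*(j+1)))
      - qInt q (2*j+s+2) * q ^ (2*j+s+1) *
          (qBinom q (2*j+s+1) (2*j) * qHermiteCoeff q (2*j)) := by
  have e1 : (2*j+s+3) - 2*(j+1) = s+1 := by omega
  have e2 : (2*j+s+2) - 2*(j+1) = s := by omega
  have e3 : (2*j+s+1) - 2*j = s+1 := by omega
  have e4 : (j+1) * ((j+1) - 1) = j*(j-1) + 2*j := by
    cases j with
    | zero => rfl
    | succ i => simp [Nat.succ_sub_one]; ring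
  have eI : qInt q (2*j+s+3) = qInt q (2*j+2) + q^(2*j+2) * qInt q (s+1) := by
    have h : 2*j+s+3 = (2*j+2)+(s+1) := by omega
    rw [h, qInt_add]
  rw [qBinom, qBinom, qBinom, e1, e2, e3, qHermiteCoeff_even, qHermiteCoeff_even]
  have f1 : qFact q (2*j+s+3) = qFact q (2*j+s+1) * qInt q (2*j+s+2) * qInt q (2*j+s+3) := by
    have : 2*j+s+3 = (2*j+s+2)+1 := by omega
    rw [this, qFact_succ]
    have : 2*j+s+2 = (2*j+s+1)+1 := by omega
    rw [this, qFact_succ]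
  have f2 : qFact q (2*(j+1)) = qFact q (2*j+1) * qInt q (2*j+2) := by
    have : 2*(j+1) = (2*j+1)+1 := by omega
    rw [this, qFact_succ]
  have f3 : qFact q (s+1) = qFact q s * qInt q (s+1) := qFact_succ s
  have f4 : qEvenDFact q (j+1) = qInt q (2*j+2) * qEvenDFact q j := by
    rw [qEvenDFact_succ]; ring_nf
  have f0 : qFact q (2*j+s+2) = qFact q (2*j+s+1) * qInt q (2*j+s+2) := by
    have : 2*j+s+2 = (2*j+s+1)+1 := by omega
    rw [this, qFact_succ]
  have f5 : (2:ℕ)*(j+1) = 2*j+2 := by omega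
  rw [f1, f0, f3, f4, eI, e4, f5]
  set a := qInt q (2*j+2) with ha
  set b := qInt q (s+1) with hb
  set u := qInt q (2*j+s+2) with hu
  set A := qFact q (2*j+s+1) with hA
  set B := qFact q s with hB
  set F2 := qFact q (2*j+2) with hF2
  set F0 := qFact q (2*j) with hF0
  set Ej := qEvenDFact q j with hEj
  have hane : a ≠ 0 := qInt_ne hq0 (by omega)
  have hbne : b ≠ 0 := qInt_ne hq0 (by omega)
  have hBne : B ≠ 0 := qFact_ne hq0 _
  have hF2ne : F2 ≠ 0 := qFact_ne hq0 _
  have hF0ne : F0 ≠ 0 := qFact_ne hq0 _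
  have hEjne : Ej ≠ 0 := qEvenDFact_ne hq0 _
  field_simp
  ring

lemma key_top (hq0 : 0 < q) (j : ℕ) :
    qHermiteCoeff q (2*(j+1)) = - (qInt q (2*j+1) * q ^ (2*j) * qHermiteCoeff q (2*j)) := by
  have e4 : (j+1) * ((j+1) - 1) = j*(j-1) + 2*j := by
    cases j with
    | zero => rfl
    | succ i => simp [Nat.succ_sub_one]; ring
  have f5 : (2:ℕ)*(j+1) = 2*j+2 := by omega
  have f2 : qFact q (2*j+2) = qFact q (2*j) * qInt q (2*j+1) * qInt q (2*j+2) := by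
    have h1 : 2*j+2 = (2*j+1)+1 := by omega
    rw [h1, qFact_succ]
    have h2 : 2*j+1 = (2*j)+1 := by omega
    rw [h2, qFact_succ]
  have f4 : qEvenDFact q (j+1) = qInt q (2*j+2) * qEvenDFact q j := by
    rw [qEvenDFact_succ]; ring_nf
  rw [qHermiteCoeff_even, qHermiteCoeff_even, e4, f5, f2, f4]
  have hane : qInt q (2*j+2) ≠ 0 := qInt_ne hq0 (by omega)
  have hEjne : qEvenDFact q j ≠ 0 := qEvenDFact_ne hq0 _
  field_simp
  ring

lemma key (hq0 : 0 < q) {n m : ℕ} (hn : 2 ≤ n) (hm : m ≤ n) :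
    qBinom q n m * qHermiteCoeff q m * q ^ (n - m)
    = (if m < n then q ^ n * (qBinom q (n-1) m * qHermiteCoeff q m) else 0)
      - (if 2 ≤ m then
          qInt q (n-1) * q ^ (n-2) * (qBinom q (n-2) (m-2) * qHermiteCoeff q (m-2)) else 0) := by
  rcases Nat.even_or_odd m with ⟨k, hk⟩ | ⟨k, hk⟩
  · -- m even
    rcases Nat.eq_zero_or_pos k with rfl | hkpos
    · -- m = 0
      subst hk
      simp only [Nat.zero_lt_of_lt, if_pos (by omega : 0 < n), if_neg (by omega : ¬ (2:ℕ) ≤ 0)]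
      have h0 : qHermiteCoeff q 0 = 1 := by
        simp [qHermiteCoeff, qFact, qEvenDFact]
      rw [h0, qBinom_zero hq0, qBinom_zero hq0]
      simp
    · obtain ⟨j, rfl⟩ : ∃ j, k = j + 1 := ⟨k - 1, by omega⟩
      have hm2 : m = 2*(j+1) := by omega
      rcases eq_or_lt_of_le hm with rfl | hlt
      · -- m = n
        rw [if_neg (lt_irrefl _), if_pos (by omega)]
        rw [qBinom_self hq0, qBinom_self hq0]
        have e1 : m - m = 0 := by omega
        have e2 : m - 1 = 2*j+1 := by omega
        have e3 : m - 2 = 2*j := by omega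
        rw [e1, e2, e3, hm2, key_top hq0]
        ring
      · -- m < n
        obtain ⟨s, rfl⟩ : ∃ s, n = 2*j + s + 3 := ⟨n - (2*j+3), by omega⟩
        rw [if_pos hlt, if_pos (by omega)]
        have e1 : 2*j+s+3 - m = s + 1 := by omega
        have e2 : 2*j+s+3 - 1 = 2*j+s+2 := by omega
        have e3 : 2*j+s+3 - 2 = 2*j+s+1 := by omega
        have e4 : m - 2 = 2*j := by omega
        rw [e1, e2, e3, e4, hm2, key_main hq0]
  · -- m odd
    have hodd : m % 2 = 1 := by omega
    have h1 : qHermiteCoeff q m = 0 := qHermiteCoeff_odd hodd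
    split_ifs with h2 h3 h3
    · have h4 : qHermiteCoeff q (m-2) = 0 := qHermiteCoeff_odd (by omega)
      simp [h1, h4]
    · simp [h1]
    · have h4 : qHermiteCoeff q (m-2) = 0 := qHermiteCoeff_odd (by omega)
      simp [h1, h4]
    · simp [h1]


/-- The three-term recurrence for the q-Hermite polynomials:
`H_{n,q}(qx) = x q^n H_{n-1,q}(x) − [n−1]_q q^(n-2) H_{n-2,q}(x)` for n ≥ 2. -/
theorem qHermite_recurrence (q : ℝ) (hq0 : 0 < q) (hq1 : q < 1) (n : ℕ) (hn : 2 ≤ n) :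
    (qHermite q n).comp (Polynomial.C q * Polynomial.X)
      = Polynomial.C (q ^ n) * Polynomial.X * qHermite q (n - 1)
        - Polynomial.C (qInt q (n - 1) * q ^ (n - 2)) * qHermite q (n - 2) := by
  have hL : (qHermite q n).comp (Polynomial.C q * Polynomial.X)
      = ∑ m ∈ Finset.range (n+1),
          Polynomial.C (qBinom q n m * qHermiteCoeff q m * q^(n-m)) * Polynomial.X^(n-m) := by
    rw [qHermite, Polynomial.comp, Polynomial.eval₂_finset_sum]
    refine Finset.sum_congr rfl fun m hm => ?_
    rw [← Polynomial.comp, Polynomial.mul_comp, Polynomial.C_comp, Polynomial.X_pow_comp,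
      mul_pow, ← Polynomial.C_pow]
    simp only [Polynomial.C_mul]
    ring
  have hR1 : Polynomial.C (q^n) * Polynomial.X * qHermite q (n-1)
      = ∑ m ∈ Finset.range (n+1), (if m < n then
          Polynomial.C (q^n * (qBinom q (n-1) m * qHermiteCoeff q m)) * Polynomial.X^(n-m)
          else 0) := by
    rw [Finset.sum_range_succ, if_neg (lt_irrefl n), add_zero]
    have hn1 : (n-1)+1 = n := by omega
    rw [qHermite, hn1, Finset.mul_sum]
    refine Finset.sum_congr rfl fun m hm => ?_
    have hmn : m < n := Finset.mem_range.mp hm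
    rw [if_pos hmn]
    have hx : (Polynomial.X : Polynomial ℝ)^(n-m) = Polynomial.X * Polynomial.X^(n-1-m) := by
      have : n - m = (n-1-m)+1 := by omega
      rw [this, pow_succ]; ring
    rw [hx]
    simp only [Polynomial.C_mul]
    ring
  have hR2 : Polynomial.C (qInt q (n-1) * q^(n-2)) * qHermite q (n-2)
      = ∑ m ∈ Finset.range (n+1), (if 2 ≤ m then
          Polynomial.C (qInt q (n-1) * q^(n-2) * (qBinom q (n-2) (m-2) * qHermiteCoeff q (m-2)))
            * Polynomial.X^(n-m) else 0) := by
    have hsplit : n+1 = ((n-2)+1)+1+1 := by omega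
    rw [hsplit, Finset.sum_range_succ', Finset.sum_range_succ']
    rw [if_neg (by omega : ¬ (2:ℕ) ≤ 0), if_neg (by omega : ¬ (2:ℕ) ≤ 0+1), add_zero, add_zero]
    rw [qHermite, Finset.mul_sum]
    refine Finset.sum_congr rfl fun i hi => ?_
    rw [if_pos (by omega : 2 ≤ i+1+1)]
    have e1 : i+1+1-2 = i := by omega
    have e2 : n-(i+1+1) = n-2-i := by omega
    rw [e1, e2]
    simp only [Polynomial.C_mul]
    ring
  rw [hL, hR1, hR2, ← Finset.sum_sub_distrib]
  refine Finset.sum_congr rfl fun m hm => ?_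
  have hm' : m ≤ n := by
    have := Finset.mem_range.mp hm; omega
  have h1 : (if m < n then
        Polynomial.C (q^n * (qBinom q (n-1) m * qHermiteCoeff q m)) * Polynomial.X^(n-m) else 0)
      = Polynomial.C (if m < n then q^n * (qBinom q (n-1) m * qHermiteCoeff q m) else 0)
          * Polynomial.X^(n-m) := by
    split_ifs <;> simp
  have h2 : (if 2 ≤ m then
        Polynomial.C (qInt q (n-1) * q^(n-2) * (qBinom q (n-2) (m-2) * qHermiteCoeff q (m-2)))
          * Polynomial.X^(n-m) else 0)
      = Polynomial.C (if 2 ≤ m then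
          qInt q (n-1) * q^(n-2) * (qBinom q (n-2) (m-2) * qHermiteCoeff q (m-2)) else 0)
          * Polynomial.X^(n-m) := by
    split_ifs <;> simp
  rw [h1, h2, ← sub_mul, ← Polynomial.C_sub, ← key hq0 hn hm']
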